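/- arXiv:2009.00800 — 9 statements merged into one kernel-verified Lean document; each statement's English description precedes it below -/
import Mathlib

section
/- Let f : 2^N → ℝ be monotone and submodular and let γ > 0. Let π be a permutation of N that has no swaps and no γ-moves with respect to mff_π(π_i) := f(π_i | π_{1:i−1}). Then for every index i with f(π_i | π_{1:i−1}) > 0 and every index i′ > i, one has f(π_{i′} | π_{1:i−1}) < γ · f(π_i | π_{1:i−1}); equivalently, if π′ is the permutation obtained by moving π_{i′} to position i, then mff_π(π_i) > mff_{π′}(π_{i′}) / γ. -/
open Finset

/-- The marginal value `f(u | C) := f({u} ∪ C) - f C`. -/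
def marg {V : Type*} [DecidableEq V] (f : Finset V → ℝ) (u : V) (C : Finset V) : ℝ :=
  f (insert u C) - f C

/-- The prefix `π_{1:i}` of a permutation `π` (0-indexed: the set of the first `i` elements). -/
def pref {V : Type*} [DecidableEq V] {n : ℕ} (π : Fin n → V) (i : ℕ) : Finset V :=
  (Finset.univ.filter fun j : Fin n => (j : ℕ) < i).image π

/-- The marginal coverage `mff_π(π_i) := f(π_i | π_{1:i-1})` of the element at position `i`. -/
def mff {V : Type*} [DecidableEq V] {n : ℕ} (f : Finset V → ℝ) (π : Fin n → V) (i : Fin n) : ℝ :=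
  marg f (π i) (pref π i)

/-- If `π` has no swaps (its coverages are nonincreasing) and no legal `γ`-moves
(for all positions `p < q`, moving `π_q` to position `p` — which gives it coverage
`f(π_q | π_{1:p-1})` — fails to be a `γ`-move, i.e. there is some `i ∈ {p,…,q-1}` whose
coverage would be exceeded by less than a factor `γ`), then for every index `i` with
positive coverage and every later index `i'`, moving `π_{i'}` to position `i` yields
coverage less than `γ` times the coverage of `π_i`. -/
theorem stable_is_gamma_greedy {V : Type*} [Fintype V] [DecidableEq V]
    (f : Finset V → ℝ)
    (hmono : ∀ A B : Finset V, A ⊆ B → f A ≤ f B)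
    (hsub : ∀ A B : Finset V, f (A ∪ B) + f (A ∩ B) ≤ f A + f B)
    (γ : ℝ) (hγ : 0 < γ)
    (π : Fin (Fintype.card V) ≃ V)
    (hNoSwaps : ∀ i j : Fin (Fintype.card V), i ≤ j → mff f π j ≤ mff f π i)
    (hNoMoves : ∀ p q : Fin (Fintype.card V), p < q →
      ∃ i : Fin (Fintype.card V), p ≤ i ∧ i < q ∧
        marg f (π q) (pref π p) < γ * mff f π i) :
    ∀ i i' : Fin (Fintype.card V), i < i' → 0 < mff f π i →
      marg f (π i') (pref π i) < γ * mff f π i := by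
  intro i i' h hpos
  obtain ⟨k, hik, _, hk⟩ := hNoMoves i i' h
  calc marg f (π i') (pref π i) < γ * mff f π k := hk
    _ ≤ γ * mff f π i := mul_le_mul_of_nonneg_left (hNoSwaps i k hik) hγ.le
end

section
/- Let f : 2^N → ℝ be monotone and submodular with f(∅) = 0 and fmax > 0, and let γ ≥ 1. Let π be a permutation of N such that for every index i with f(π_i | π_{1:i−1}) > 0 and every element u ∈ N one has f(u | π_{1:i−1}) ≤ γ · f(π_i | π_{1:i−1}). Let S := {π_i : f(π_i | π_{1:i−1}) > 0}. Then f(S) = f(N), and |S| ≤ γ · (ln(fmax/fmin) + 1) · |S*| for every S* ⊆ N with f(S*) = f(N). -/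
/-!
Let `r i := f N - f(π_{1:i})` be the residual value after `i` steps. At a step with positive
marginal `δ` we have `δ ≥ fmin`, and submodularity applied to a full cover `S*` gives
`r (i-1) ≤ γ |S*| δ`. With `β := γ |S*|` the concave potential `Φ r = β (log (r / (β fmin)) + 1)`
for `r ≥ β fmin`, `Φ r = r / fmin` below, has slope `min (1 / fmin, β / r)` and therefore drops
by at least one at every such step, while `Φ (f N) ≤ β (log (fmax / fmin) + 1)` since
`f N ≤ |S*| fmax`. Full coverage holds because a skipped element has zero marginal on its prefix,
hence on the larger set `S ∪ prefix`.
-/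

open Finset

section SetFunction

variable {V : Type*} [DecidableEq V] {f : Finset V → ℝ}

lemma marg_eq_zero_of_mem {u : V} {C : Finset V} (hu : u ∈ C) : marg f u C = 0 := by
  rw [marg, insert_eq_of_mem hu, sub_self]

lemma marg_nonneg (hmono : Monotone f) (u : V) (C : Finset V) : 0 ≤ marg f u C :=
  sub_nonneg.2 (hmono (subset_insert u C))

lemma marg_antitone (hmono : Monotone f)
    (hsub : ∀ A B : Finset V, f (A ∪ B) + f (A ∩ B) ≤ f A + f B)
    {A B : Finset V} (hAB : A ⊆ B) (u : V) : marg f u B ≤ marg f u A := by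
  by_cases hu : u ∈ B
  · rw [marg_eq_zero_of_mem hu]
    exact marg_nonneg hmono u A
  · have h := hsub (insert u A) B
    rw [insert_union, union_eq_right.2 hAB, insert_inter_of_notMem hu,
      inter_eq_left.2 hAB] at h
    rw [marg, marg]
    linarith

lemma apply_union_le_add_sum_marg (hmono : Monotone f)
    (hsub : ∀ A B : Finset V, f (A ∪ B) + f (A ∩ B) ≤ f A + f B) (A C : Finset V) :
    f (A ∪ C) ≤ f C + ∑ u ∈ A, marg f u C := by
  induction A using Finset.induction_on with
  | empty => simp
  | insert a A ha ih =>
    have h := marg_antitone hmono hsub (subset_union_right : C ⊆ A ∪ C) a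
    rw [marg, ← insert_union] at h
    rw [sum_insert ha]
    linarith

lemma sub_le_card_mul_of_marg_le [Fintype V] (hmono : Monotone f)
    (hsub : ∀ A B : Finset V, f (A ∪ B) + f (A ∩ B) ≤ f A + f B)
    {A C : Finset V} (hA : f A = f univ) {m : ℝ} (hm : ∀ u, marg f u C ≤ m) :
    f univ - f C ≤ A.card * m := by
  have hunion := apply_union_le_add_sum_marg hmono hsub A C
  have hsum : ∑ u ∈ A, marg f u C ≤ A.card • m := sum_le_card_nsmul A _ m fun u _ => hm u
  have hcover := hmono (subset_union_left : A ⊆ A ∪ C)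
  rw [nsmul_eq_mul] at hsum
  linarith

end SetFunction

section Trace

variable {V : Type*} [DecidableEq V] {n : ℕ}

lemma pref_zero (π : Fin n → V) : pref π 0 = ∅ := by
  simp [pref]

lemma pref_succ (π : Fin n → V) (i : Fin n) :
    pref π (i + 1) = insert (π i) (pref π i) := by
  ext v
  simp only [pref, mem_image, mem_filter, mem_univ, true_and, mem_insert, Nat.lt_succ_iff_lt_or_eq,
    or_and_right, exists_or, Fin.val_inj, exists_eq_left, eq_comm (a := v)]
  exact or_comm

lemma pref_eq_univ [Fintype V] (π : Fin n ≃ V) : pref π n = univ :=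
  eq_univ_of_forall fun v => mem_image.2 ⟨π.symm v, by simp⟩

lemma pref_mono (π : Fin n → V) : Monotone (pref π) := fun _ _ hij =>
  image_subset_image (monotone_filter_right _ fun _ _ hj => hj.trans_le hij)

lemma mff_eq_sub (f : Finset V → ℝ) (π : Fin n → V) (i : Fin n) :
    mff f π i = f (pref π (i + 1)) - f (pref π i) := by
  rw [mff, marg, pref_succ]

noncomputable def mffSupport (f : Finset V → ℝ) (π : Fin n → V) : Finset V :=
  (univ.filter fun i => 0 < mff f π i).image π

variable {f : Finset V → ℝ}

lemma apply_mffSupport_union_pref (hmono : Monotone f)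
    (hsub : ∀ A B : Finset V, f (A ∪ B) + f (A ∩ B) ≤ f A + f B) (π : Fin n → V) :
    ∀ i ≤ n, f (mffSupport f π ∪ pref π i) = f (mffSupport f π) := by
  intro i
  induction i with
  | zero => simp [pref_zero]
  | succ i ih =>
    intro hi
    set S := mffSupport f π
    have hmarg : marg f (π ⟨i, hi⟩) (S ∪ pref π i) ≤ 0 := by
      by_cases hpos : 0 < mff f π ⟨i, hi⟩
      · exact (marg_eq_zero_of_mem (mem_union_left _ (mem_image_of_mem π (by simpa)))).le
      · exact (marg_antitone hmono hsub subset_union_right _).trans (not_lt.1 hpos)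
    rw [← ih (by omega), pref_succ π ⟨i, hi⟩, union_insert]
    exact le_antisymm (by rw [marg] at hmarg; linarith) (hmono (subset_insert _ _))

end Trace

noncomputable def greedyPotential (β c r : ℝ) : ℝ :=
  if β * c ≤ r then β * (Real.log (r / (β * c)) + 1) else r / c

section Potential

open Real

variable {β c : ℝ}

lemma greedyPotential_nonneg (hβ : 0 < β) (hc : 0 < c) {r : ℝ} (hr : 0 ≤ r) :
    0 ≤ greedyPotential β c r := by
  unfold greedyPotential
  split_ifs with h
  · have : 0 ≤ log (r / (β * c)) := log_nonneg ((one_le_div (by positivity)).2 h)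
    positivity
  · positivity

lemma greedyPotential_add_one_le (hβ : 0 < β) (hc : 0 < c) {a b : ℝ}
    (hδ : c ≤ a - b) (ha : a ≤ β * (a - b)) :
    greedyPotential β c b + 1 ≤ greedyPotential β c a := by
  have hβc : 0 < β * c := mul_pos hβ hc
  unfold greedyPotential
  by_cases hca : β * c ≤ a
  · have ha0 : 0 < a := hβc.trans_le hca
    have hfrac : 1 ≤ β * ((a - b) / a) := by rw [← mul_div_assoc, one_le_div ha0]; exact ha
    rw [if_pos hca]
    by_cases hcb : β * c ≤ b
    · have hb0 : 0 < b := hβc.trans_le hcb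
      have hlog : log (a / (β * c)) - log (b / (β * c)) = log (a / b) := by
        rw [← log_div (by positivity) (by positivity)]
        field_simp
      have h := one_sub_inv_le_log_of_pos (div_pos ha0 hb0)
      rw [inv_div, one_sub_div ha0.ne', ← hlog] at h
      rw [if_pos hcb]
      nlinarith
    · have h := one_sub_inv_le_log_of_pos (div_pos ha0 hβc)
      rw [inv_div] at h
      -- tangent bound at `a`, corrected across the kink of the potential at `β * c`
      have hprod : 0 ≤ (β - b / c) * (1 - β * c / a) := by
        apply mul_nonneg
        · rw [sub_nonneg, div_le_iff₀ hc]; linarith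
        · rw [sub_nonneg, div_le_one ha0]; exact hca
      have hsplit : β * ((a - b) / a)
          = β * (1 - β * c / a) + β - b / c - (β - b / c) * (1 - β * c / a) := by
        field_simp; ring
      rw [if_neg hcb]
      nlinarith
  · have hcb : ¬ β * c ≤ b := fun h => hca (h.trans (by linarith))
    rw [if_neg hca, if_neg hcb, div_add_one hc.ne', div_le_div_iff_of_pos_right hc]
    linarith

lemma greedyPotential_le (hβ : 0 < β) (hc : 0 < c) {M r : ℝ} (hcM : c ≤ M) (hr : r ≤ β * M) :
    greedyPotential β c r ≤ β * (log (M / c) + 1) := by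
  have hlog : 0 ≤ log (M / c) := log_nonneg ((one_le_div hc).2 hcM)
  unfold greedyPotential
  split_ifs with h
  · have : r / (β * c) ≤ M / c := by
      rw [div_le_div_iff₀ (by positivity) hc]; nlinarith
    have := log_le_log (div_pos ((mul_pos hβ hc).trans_le h) (by positivity)) this
    gcongr
  · rw [not_le] at h
    have : r / c ≤ β := by rw [div_le_iff₀ hc]; linarith
    nlinarith

theorem card_filter_add_greedyPotential_le (hβ : 0 < β) (hc : 0 < c) {r : ℕ → ℝ}
    (hr : Antitone r) (n : ℕ)
    (hstep : ∀ i < n, r (i + 1) < r i → c ≤ r i - r (i + 1) ∧ r i ≤ β * (r i - r (i + 1))) :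
    (((range n).filter fun i => r (i + 1) < r i).card : ℝ) + greedyPotential β c (r n)
      ≤ greedyPotential β c (r 0) := by
  induction n with
  | zero => simp
  | succ n ih =>
    have ih := ih fun i hi => hstep i (by omega)
    rw [range_add_one, filter_insert]
    split_ifs with hn
    · obtain ⟨hδ, hfrac⟩ := hstep n (by omega) hn
      have := greedyPotential_add_one_le hβ hc hδ hfrac
      rw [card_insert_of_notMem (by simp)]
      push_cast
      linarith
    · rw [le_antisymm (hr n.le_succ) (not_lt.1 hn)]
      exact ih

end Potential

section Count

variable {V : Type*} [DecidableEq V] [Fintype V] {n : ℕ} {f : Finset V → ℝ} {β c : ℝ}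

lemma card_mffSupport_le_greedyPotential (hmono : Monotone f) {π : Fin n → V}
    (hπ : Function.Injective π) (hβ : 0 < β) (hc : 0 < c)
    (hstep : ∀ i, 0 < mff f π i → c ≤ mff f π i ∧ f univ - f (pref π i) ≤ β * mff f π i) :
    ((mffSupport f π).card : ℝ) ≤ greedyPotential β c (f univ - f ∅) := by
  set r : ℕ → ℝ := fun i => f univ - f (pref π i)
  have hr : Antitone r := fun i j hij => sub_le_sub_left (hmono (pref_mono π hij)) _
  have hmff (i : Fin n) : mff f π i = r i - r (i + 1) := by
    simp only [r, mff_eq_sub]; ring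
  have hcard : (mffSupport f π).card = ((range n).filter fun i => r (i + 1) < r i).card := by
    rw [mffSupport, card_image_of_injective _ hπ, card_filter, card_filter,
      ← Fin.sum_univ_eq_sum_range fun i => if r (i + 1) < r i then 1 else 0]
    simp_rw [hmff, sub_pos]
  have hcount := card_filter_add_greedyPotential_le hβ hc hr n fun i hi hlt => by
    simpa only [hmff] using hstep ⟨i, hi⟩ (by rwa [hmff, sub_pos])
  have hend : 0 ≤ greedyPotential β c (r n) :=
    greedyPotential_nonneg hβ hc (sub_nonneg.2 (hmono (subset_univ _)))
  simp only [r, pref_zero] at hcount hend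
  rw [hcard]
  linarith

end Count

theorem greedy_trace_competitive_unitcost_general {V : Type*} [Fintype V] [DecidableEq V] [Nonempty V]
    (f : Finset V → ℝ)
    (hmono : ∀ A B : Finset V, A ⊆ B → f A ≤ f B)
    (hsub : ∀ A B : Finset V, f (A ∪ B) + f (A ∩ B) ≤ f A + f B)
    (γ : ℝ) (hγ : 1 ≤ γ)
    (fmax fmin : ℝ)
    (hfmax : fmax = Finset.univ.sup' Finset.univ_nonempty (fun u : V => marg f u ∅))
    (hfmin_le : ∀ (u : V) (S : Finset V), 0 < marg f u S → fmin ≤ marg f u S)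
    (hfmin_mem : ∃ (u : V) (S : Finset V), 0 < marg f u S ∧ marg f u S = fmin)
    (π : Fin (Fintype.card V) ≃ V)
    (hgreedy : ∀ i : Fin (Fintype.card V), 0 < mff f π i →
      ∀ u : V, marg f u (pref π i) ≤ γ * mff f π i) :
    f ((Finset.univ.filter fun i : Fin (Fintype.card V) => 0 < mff f π i).image π)
        = f Finset.univ ∧
    ∀ Sstar : Finset V, f Sstar = f Finset.univ →
      (((Finset.univ.filter fun i : Fin (Fintype.card V) => 0 < mff f π i).image π).card : ℝ)
        ≤ γ * (Real.log (fmax / fmin) + 1) * (Sstar.card : ℝ) := by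
  have hmono : Monotone f := hmono
  refine ⟨?_, fun Sstar hSstar => ?_⟩
  · have hcover := apply_mffSupport_union_pref hmono hsub π _ le_rfl
    rwa [pref_eq_univ, union_eq_right.2 (subset_univ _), eq_comm] at hcover
  obtain ⟨u, C, hpos, rfl⟩ := hfmin_mem
  have hmax (v : V) : marg f v ∅ ≤ fmax := hfmax ▸ le_sup' (fun v => marg f v ∅) (mem_univ v)
  have hminmax : marg f u C ≤ fmax := (marg_antitone hmono hsub C.empty_subset u).trans (hmax u)
  have hcard : 0 < (Sstar.card : ℝ) := by
    refine Nat.cast_pos.2 (card_pos.2 (nonempty_iff_ne_empty.2 ?_))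
    rintro rfl
    have := hmono (subset_univ (insert u C))
    have := hmono C.empty_subset
    rw [marg] at hpos
    linarith
  have hβ : 0 < γ * Sstar.card := by positivity
  have hstep (i) (hi : 0 < mff f π i) :
      marg f u C ≤ mff f π i ∧ f univ - f (pref π i) ≤ γ * Sstar.card * mff f π i := by
    refine ⟨hfmin_le _ _ hi, ?_⟩
    have := sub_le_card_mul_of_marg_le hmono hsub hSstar (hgreedy i hi)
    linarith
  have hfuniv : f univ - f ∅ ≤ γ * Sstar.card * fmax := by
    have := sub_le_card_mul_of_marg_le hmono hsub hSstar hmax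
    have := mul_le_mul_of_nonneg_right hγ (mul_nonneg hcard.le (hpos.le.trans hminmax))
    linarith
  calc ((mffSupport f π).card : ℝ)
      ≤ greedyPotential (γ * Sstar.card) (marg f u C) (f univ - f ∅) :=
        card_mffSupport_le_greedyPotential hmono π.injective hβ hpos hstep
    _ ≤ γ * Sstar.card * (Real.log (fmax / marg f u C) + 1) :=
        greedyPotential_le hβ hpos hminmax hfuniv
    _ = _ := by ring

/-- If `π` is an approximate-greedy stack trace (every element `u` has
`f(u | π_{1:i-1}) ≤ γ · f(π_i | π_{1:i-1})` whenever `f(π_i | π_{1:i-1}) > 0`), then the set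
`S` of elements of positive marginal coverage fully covers, and its size is at most
`γ (ln(fmax/fmin) + 1)` times the size of any full cover `S*`. -/
theorem greedy_trace_competitive_unitcost {V : Type*} [Fintype V] [DecidableEq V] [Nonempty V]
    (f : Finset V → ℝ)
    (hmono : ∀ A B : Finset V, A ⊆ B → f A ≤ f B)
    (hsub : ∀ A B : Finset V, f (A ∪ B) + f (A ∩ B) ≤ f A + f B)
    (hf0 : f ∅ = 0)
    (γ : ℝ) (hγ : 1 ≤ γ)
    (fmax fmin : ℝ)
    (hfmax : fmax = Finset.univ.sup' Finset.univ_nonempty (fun u : V => marg f u ∅))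
    (hfmaxpos : 0 < fmax)
    (hfmin_le : ∀ (u : V) (S : Finset V), 0 < marg f u S → fmin ≤ marg f u S)
    (hfmin_mem : ∃ (u : V) (S : Finset V), 0 < marg f u S ∧ marg f u S = fmin)
    (π : Fin (Fintype.card V) ≃ V)
    (hgreedy : ∀ i : Fin (Fintype.card V), 0 < mff f π i →
      ∀ u : V, marg f u (pref π i) ≤ γ * mff f π i) :
    f ((Finset.univ.filter fun i : Fin (Fintype.card V) => 0 < mff f π i).image π)
        = f Finset.univ ∧
    ∀ Sstar : Finset V, f Sstar = f Finset.univ →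
      (((Finset.univ.filter fun i : Fin (Fintype.card V) => 0 < mff f π i).image π).card : ℝ)
        ≤ γ * (Real.log (fmax / fmin) + 1) * (Sstar.card : ℝ) :=
  greedy_trace_competitive_unitcost_general f hmono hsub γ hγ fmax fmin hfmax hfmin_le hfmin_mem π
    hgreedy
end

section
/- Let γ > e and set α := 1/ln γ. Let (v_i) and (a_i), indexed by a finite set I, be real numbers with 0 ≤ a_i ≤ v_i for each i, let A := ∑_{i∈I} a_i, and let m > 0 satisfy A ≥ m. Assume γ·v_i ≤ A for every i with a_i > 0. Then A^α + ∑_{i∈I} (v_i − a_i)^α − ∑_{i∈I} v_i^α ≤ −(γ/(e·ln γ) − 1) · m^α. -/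
/-!
Since `α = 1/ln γ < 1`, the map `t ↦ t^α` is concave, and its tangent line at `v_i` gives
`v_i^α - (v_i - a_i)^α ≥ α a_i v_i^(α-1) ≥ α a_i (A/γ)^(α-1)`, because `v_i ≤ A/γ` whenever
`a_i > 0` and `α - 1 < 0`. Summing over `i`, the total loss is at least
`α A (A/γ)^(α-1) = γ^(1-α)/ln γ · A^α = γ/(e ln γ) · A^α`, as `γ^α = e`.
Finally `e ln γ ≤ γ`, so the coefficient `γ/(e ln γ) - 1` is nonnegative and `A^α ≥ m^α` finishes.
-/

open Finset Real

theorem rpow_sub_le_rpow_sub_mul_rpow_sub_one {v a α : ℝ} (hav : a ≤ v) (hv : 0 < v) (hα0 : 0 ≤ α) (hα1 : α ≤ 1) :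
    (v - a) ^ α ≤ v ^ α - α * a * v ^ (α - 1) := by
  have hav' : a / v ≤ 1 := div_le_one_of_le₀ hav hv.le
  have hfactor : v - a = v * (1 + -(a / v)) := by field_simp; ring
  calc (v - a) ^ α = v ^ α * (1 + -(a / v)) ^ α := by
        rw [hfactor, mul_rpow hv.le (by linarith)]
    _ ≤ v ^ α * (1 + α * -(a / v)) :=
        mul_le_mul_of_nonneg_left
          (rpow_one_add_le_one_add_mul_self (by linarith) hα0 hα1) (rpow_nonneg hv.le α)
    _ = v ^ α - α * a * v ^ (α - 1) := by
        rw [rpow_sub_one hv.ne']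
        field_simp
        ring

theorem mul_rpow_sub_one_le_rpow_sub_rpow_sub {v w a α : ℝ} (ha : 0 ≤ a) (hav : a ≤ v)
    (hvw : 0 < a → v ≤ w) (hα0 : 0 ≤ α) (hα1 : α ≤ 1) :
    α * a * w ^ (α - 1) ≤ v ^ α - (v - a) ^ α := by
  rcases ha.eq_or_lt with rfl | ha_pos
  · simp
  have hv : 0 < v := ha_pos.trans_le hav
  have hw : w ^ (α - 1) ≤ v ^ (α - 1) := rpow_le_rpow_of_nonpos hv (hvw ha_pos) (by linarith)
  have hmul : α * a * w ^ (α - 1) ≤ α * a * v ^ (α - 1) :=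
    mul_le_mul_of_nonneg_left hw (by positivity)
  linarith [rpow_sub_le_rpow_sub_mul_rpow_sub_one hav hv hα0 hα1]

theorem mul_sum_mul_rpow_sub_one_le_sum_rpow_sub_sum_rpow {ι : Type*} (I : Finset ι)
    {v a : ι → ℝ} {w α : ℝ} (ha : ∀ i ∈ I, 0 ≤ a i ∧ a i ≤ v i)
    (hvw : ∀ i ∈ I, 0 < a i → v i ≤ w) (hα0 : 0 ≤ α) (hα1 : α ≤ 1) :
    α * (∑ i ∈ I, a i) * w ^ (α - 1) ≤ ∑ i ∈ I, v i ^ α - ∑ i ∈ I, (v i - a i) ^ α := by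
  rw [← sum_sub_distrib, mul_sum, sum_mul]
  exact sum_le_sum fun i hi ↦
    mul_rpow_sub_one_le_rpow_sub_rpow_sub (ha i hi).1 (ha i hi).2 (hvw i hi) hα0 hα1

theorem inv_log_mul_mul_div_rpow_inv_log_sub_one {γ A : ℝ} (hγ : 0 < γ) (hγ1 : γ ≠ 1)
    (hA : 0 < A) :
    (log γ)⁻¹ * A * (A / γ) ^ ((log γ)⁻¹ - 1)
      = γ / (exp 1 * log γ) * A ^ (log γ)⁻¹ := by
  rw [div_rpow hA.le hγ.le, rpow_sub_one hA.ne', rpow_sub_one hγ.ne', rpow_inv_log hγ hγ1]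
  have : log γ ≠ 0 := log_ne_zero_of_pos_of_ne_one hγ hγ1
  field_simp

theorem one_le_div_exp_one_mul_log {γ : ℝ} (hγ : 0 < γ) (hlog : 0 < log γ) :
    1 ≤ γ / (exp 1 * log γ) := by
  rw [one_le_div (by positivity)]
  simpa [exp_log hγ] using exp_one_mul_le_exp (x := log γ)

/-- Tsallis entropy decrease during a `γ`-move: with `α = 1/ln γ`, if `0 ≤ a_i ≤ v_i`,
`A := ∑ a_i ≥ m > 0` and `γ v_i ≤ A` whenever `a_i > 0`, then
`A^α + ∑ (v_i − a_i)^α − ∑ v_i^α ≤ −(γ/(e ln γ) − 1) m^α`. -/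
theorem tsallis_gamma_move_decrease (γ m : ℝ) (hγ : Real.exp 1 < γ) (hm : 0 < m)
    {ι : Type*} (I : Finset ι) (v a : ι → ℝ)
    (ha : ∀ i ∈ I, 0 ≤ a i ∧ a i ≤ v i)
    (hA : m ≤ ∑ i ∈ I, a i)
    (hmove : ∀ i ∈ I, 0 < a i → γ * v i ≤ ∑ i' ∈ I, a i') :
    (∑ i ∈ I, a i) ^ (1 / Real.log γ)
        + ∑ i ∈ I, (v i - a i) ^ (1 / Real.log γ)
        - ∑ i ∈ I, v i ^ (1 / Real.log γ)
      ≤ -(γ / (Real.exp 1 * Real.log γ) - 1) * m ^ (1 / Real.log γ) := by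
  set A := ∑ i ∈ I, a i
  have hγ0 : 0 < γ := (exp_pos 1).trans hγ
  have hlog : 1 < log γ := (lt_log_iff_exp_lt hγ0).2 hγ
  have hα0 : 0 ≤ 1 / log γ := by positivity
  have hα1 : 1 / log γ ≤ 1 := (div_le_one (by linarith)).2 hlog.le
  have hvw : ∀ i ∈ I, 0 < a i → v i ≤ A / γ := fun i hi hai ↦
    (le_div_iff₀ hγ0).2 (by linarith [hmove i hi hai])
  have hloss := mul_sum_mul_rpow_sub_one_le_sum_rpow_sub_sum_rpow I ha hvw hα0 hα1
  have hγ1 : γ ≠ 1 := by rintro rfl; norm_num at hlog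
  rw [one_div, inv_log_mul_mul_div_rpow_inv_log_sub_one hγ0 hγ1 (hm.trans_le hA)] at hloss
  have hcoeff := one_le_div_exp_one_mul_log hγ0 (by linarith)
  have hmA : m ^ (1 / log γ) ≤ A ^ (1 / log γ) := rpow_le_rpow hm.le hA hα0
  rw [one_div] at hmA ⊢
  linarith [mul_le_mul_of_nonneg_left hmA (sub_nonneg.2 hcoeff)]
end

section
/- Let h : [0, ∞) → ℝ be nondecreasing and concave with h(0) = 0, and suppose that for every x ≥ 0 the map y ↦ y·h(x/y) is nondecreasing in y on (0, ∞). Let m > 0 and cmax > 0, and let (c_i), (k_i), (Δ_i), indexed by a finite set I, satisfy 0 < c_i ≤ cmax, k_i ≥ 0, and for each i either Δ_i = 0 or Δ_i ≥ m. Then ∑_{i∈I} c_i·( h((k_i + Δ_i)/c_i) − h(k_i/c_i) ) ≤ (∑_{i∈I} Δ_i / m) · cmax · h(m/cmax). -/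
/-!
Concavity and `h 0 = 0` make the slope `h x / x` antitone on `(0, ∞)`, so `h` is subadditive on
`[0, ∞)`. Hence each term is at most `c_i h(Δ_i / c_i)`; the monotonicity of the perspective
`y ↦ y h(x / y)` raises `c_i` to `cmax`, and the antitone slope gives
`cmax h(Δ_i / cmax) ≤ (Δ_i / m) cmax h(m / cmax)` as soon as `Δ_i ≥ m`.
-/

open Finset

namespace ConcaveOn

variable {h : ℝ → ℝ}

theorem antitoneOn_div_of_map_zero (hconc : ConcaveOn ℝ (Set.Ici 0) h) (h0 : h 0 = 0) :
    AntitoneOn (fun x => h x / x) (Set.Ioi 0) := by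
  intro s hs t ht hst
  have hs : (0 : ℝ) < s := hs
  have ht : (0 : ℝ) < t := ht
  have := hconc.antitoneOn_slope_gt Set.self_mem_Ici ⟨hs.le, hs⟩ ⟨ht.le, ht⟩ hst
  simpa only [slope_def_field, h0, sub_zero] using this

theorem map_add_le_of_map_zero (hconc : ConcaveOn ℝ (Set.Ici 0) h) (h0 : h 0 = 0)
    {a b : ℝ} (ha : 0 ≤ a) (hb : 0 ≤ b) : h (a + b) ≤ h a + h b := by
  rcases ha.eq_or_lt with rfl | ha
  · simp [h0]
  rcases hb.eq_or_lt with rfl | hb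
  · simp [h0]
  have hab : 0 < a + b := add_pos ha hb
  have hslope := hconc.antitoneOn_div_of_map_zero h0
  have hA : h (a + b) / (a + b) ≤ h a / a := hslope ha hab (by linarith)
  have hB : h (a + b) / (a + b) ≤ h b / b := hslope hb hab (by linarith)
  calc h (a + b) = a * (h (a + b) / (a + b)) + b * (h (a + b) / (a + b)) := by
        field_simp
    _ ≤ a * (h a / a) + b * (h b / b) := by gcongr
    _ = h a + h b := by field_simp

end ConcaveOn

theorem mul_map_add_sub_map_le {h : ℝ → ℝ} (hconc : ConcaveOn ℝ (Set.Ici 0) h) (h0 : h 0 = 0)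
    (hscale : ∀ x : ℝ, 0 ≤ x → ∀ y z : ℝ, 0 < y → y ≤ z → y * h (x / y) ≤ z * h (x / z))
    {m c cmax k Δ : ℝ} (hm : 0 < m) (hc : 0 < c) (hccmax : c ≤ cmax) (hk : 0 ≤ k)
    (hΔ : m ≤ Δ) :
    c * (h ((k + Δ) / c) - h (k / c)) ≤ Δ / m * cmax * h (m / cmax) := by
  have hΔpos : 0 < Δ := hm.trans_le hΔ
  have hcmax : 0 < cmax := hc.trans_le hccmax
  have hsub : h ((k + Δ) / c) - h (k / c) ≤ h (Δ / c) := by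
    rw [add_div, sub_le_iff_le_add']
    exact hconc.map_add_le_of_map_zero h0 (by positivity) (by positivity)
  have hslope : h (Δ / cmax) / (Δ / cmax) ≤ h (m / cmax) / (m / cmax) :=
    hconc.antitoneOn_div_of_map_zero h0 (by positivity : 0 < m / cmax)
      (by positivity : 0 < Δ / cmax) (by gcongr)
  have hslope' : cmax * h (Δ / cmax) ≤ Δ / m * cmax * h (m / cmax) := by
    rw [div_div_eq_mul_div, div_div_eq_mul_div, div_le_div_iff₀ hΔpos hm] at hslope
    rw [div_mul_eq_mul_div, div_mul_eq_mul_div, le_div_iff₀ hm]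
    linarith
  calc c * (h ((k + Δ) / c) - h (k / c)) ≤ c * h (Δ / c) := by gcongr
    _ ≤ cmax * h (Δ / cmax) := hscale Δ hΔpos.le c cmax hc hccmax
    _ ≤ Δ / m * cmax * h (m / cmax) := hslope'

theorem potential_increase_bound_general (h : ℝ → ℝ)
    (hconc : ConcaveOn ℝ (Set.Ici 0) h)
    (h0 : h 0 = 0)
    (hscale : ∀ x : ℝ, 0 ≤ x → ∀ y z : ℝ, 0 < y → y ≤ z → y * h (x / y) ≤ z * h (x / z))
    (m cmax : ℝ) (hm : 0 < m)
    {ι : Type*} (I : Finset ι) (c k Δ : ι → ℝ)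
    (hc : ∀ i ∈ I, 0 < c i ∧ c i ≤ cmax)
    (hk : ∀ i ∈ I, 0 ≤ k i)
    (hΔ : ∀ i ∈ I, Δ i = 0 ∨ m ≤ Δ i) :
    ∑ i ∈ I, c i * (h ((k i + Δ i) / c i) - h (k i / c i))
      ≤ (∑ i ∈ I, Δ i) / m * cmax * h (m / cmax) := by
  calc ∑ i ∈ I, c i * (h ((k i + Δ i) / c i) - h (k i / c i))
      ≤ ∑ i ∈ I, Δ i / m * cmax * h (m / cmax) := by
        refine sum_le_sum fun i hi => ?_
        obtain ⟨hci, hccmax⟩ := hc i hi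
        rcases hΔ i hi with hΔ0 | hΔm
        · simp [hΔ0]
        · exact mul_map_add_sub_map_le hconc h0 hscale hm hci hccmax (hk i hi) hΔm
    _ = (∑ i ∈ I, Δ i) / m * cmax * h (m / cmax) := by simp only [sum_div, sum_mul]

/-- Bound on the potential increase when a function arrives, for a general concave,
nondecreasing `h` with `h(0) = 0` such that `y ↦ y·h(x/y)` is nondecreasing:
`∑ c_i (h((k_i + Δ_i)/c_i) − h(k_i/c_i)) ≤ (∑ Δ_i / m) · cmax · h(m/cmax)`. -/
theorem potential_increase_bound (h : ℝ → ℝ)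
    (hmono : ∀ x y : ℝ, 0 ≤ x → x ≤ y → h x ≤ h y)
    (hconc : ConcaveOn ℝ (Set.Ici 0) h)
    (h0 : h 0 = 0)
    (hscale : ∀ x : ℝ, 0 ≤ x → ∀ y z : ℝ, 0 < y → y ≤ z → y * h (x / y) ≤ z * h (x / z))
    (m cmax : ℝ) (hm : 0 < m) (hcmax : 0 < cmax)
    {ι : Type*} (I : Finset ι) (c k Δ : ι → ℝ)
    (hc : ∀ i ∈ I, 0 < c i ∧ c i ≤ cmax)
    (hk : ∀ i ∈ I, 0 ≤ k i)
    (hΔ : ∀ i ∈ I, Δ i = 0 ∨ m ≤ Δ i) :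
    ∑ i ∈ I, c i * (h ((k i + Δ i) / c i) - h (k i / c i))
      ≤ (∑ i ∈ I, Δ i) / m * cmax * h (m / cmax) :=
  potential_increase_bound_general h hconc h0 hscale m cmax hm I c k Δ hc hk hΔ
end

section
/- Let h : [0, ∞) → ℝ be concave and differentiable on (0, ∞). Let c_u, c_v > 0, let x, y be real numbers with 0 < x ≤ y, and let k satisfy 0 ≤ k ≤ x·c_u. Then c_u·h(x − k/c_u) + c_v·h(y + k/c_v) ≤ c_u·h(x) + c_v·h(y). -/
/-!
By concavity, the secant slope of `h` on `[x - k/cu, x]` is at least its secant slope on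
`[y, y + k/cv]`, since the first interval lies to the left of the second. Multiplying both
slopes by `k` turns them into `cu * (h x - h (x - k/cu))` and `cv * (h (y + k/cv) - h y)`.
-/

theorem ConcaveOn.slope_anti_of_le {𝕜 : Type*} [Field 𝕜] [LinearOrder 𝕜] [IsStrictOrderedRing 𝕜]
    {s : Set 𝕜} {f : 𝕜 → 𝕜} (hf : ConcaveOn 𝕜 s f) {a b c d : 𝕜} (ha : a ∈ s) (hd : d ∈ s)
    (hab : a < b) (hbc : b ≤ c) (hcd : c < d) :
    (f d - f c) / (d - c) ≤ (f b - f a) / (b - a) := by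
  rcases hbc.eq_or_lt with rfl | hbc
  · exact hf.slope_anti_adjacent ha hd hab hcd
  have hb : b ∈ s := hf.1.ordConnected.out ha hd ⟨hab.le, hbc.le.trans hcd.le⟩
  have hc : c ∈ s := hf.1.ordConnected.out ha hd ⟨(hab.trans hbc).le, hcd.le⟩
  exact (hf.slope_anti_adjacent hb hd hbc hcd).trans (hf.slope_anti_adjacent ha hc hab hbc)

theorem weighted_swap_bound_general (h : ℝ → ℝ)
    (hconc : ConcaveOn ℝ (Set.Ici 0) h)
    (cu cv : ℝ) (hcu : 0 < cu) (hcv : 0 < cv)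
    (x y k : ℝ) (hx : 0 < x) (hxy : x ≤ y) (hk0 : 0 ≤ k) (hk : k ≤ x * cu) :
    cu * h (x - k / cu) + cv * h (y + k / cv) ≤ cu * h x + cv * h y := by
  rcases hk0.eq_or_lt with rfl | hkpos
  · simp
  have hku : k / cu ≤ x := (div_le_iff₀ hcu).2 hk
  have hkv : 0 < k / cv := div_pos hkpos hcv
  have hslope := hconc.slope_anti_of_le (b := x) (c := y) (d := y + k / cv)
    (Set.mem_Ici.2 (sub_nonneg.2 hku)) (Set.mem_Ici.2 (by linarith))
    (sub_lt_self x (by positivity)) hxy (lt_add_of_pos_right y hkv)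
  rw [sub_sub_cancel, add_sub_cancel_left, div_div_eq_mul_div, div_div_eq_mul_div,
    div_le_div_iff_of_pos_right hkpos] at hslope
  linarith

/-- Swaps do not increase the weighted potential: for concave `h` differentiable on `(0,∞)`,
`c_u, c_v > 0`, `0 < x ≤ y` and `0 ≤ k ≤ x·c_u`,
`c_u·h(x − k/c_u) + c_v·h(y + k/c_v) ≤ c_u·h(x) + c_v·h(y)`. -/
theorem weighted_swap_bound (h : ℝ → ℝ)
    (hconc : ConcaveOn ℝ (Set.Ici 0) h)
    (hdiff : DifferentiableOn ℝ h (Set.Ioi 0))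
    (cu cv : ℝ) (hcu : 0 < cu) (hcv : 0 < cv)
    (x y k : ℝ) (hx : 0 < x) (hxy : x ≤ y) (hk0 : 0 ≤ k) (hk : k ≤ x * cu) :
    cu * h (x - k / cu) + cv * h (y + k / cv) ≤ cu * h x + cv * h y :=
  weighted_swap_bound_general h hconc cu cv hcu hcv x y k hx hxy hk0 hk
end

section
/- Let γ > 0 and ε > 0, and let h : [0, ∞) → ℝ be nondecreasing, concave, differentiable on (0, ∞), with h(0) = 0, satisfying x·h′(x/γ) ≥ (1 + ε)·h(x) for all x > 0, and such that for every x ≥ 0 the map y ↦ y·h(x/y) is nondecreasing in y on (0, ∞). Let m > 0, c_min > 0 and c_u ≥ c_min. Let (c_i), (v_i), (a_i), indexed by a finite set I, satisfy c_i > 0 and 0 ≤ a_i ≤ v_i, let A := ∑_{i∈I} a_i, and assume A ≥ m and γ·v_i/c_i ≤ A/c_u for every i with a_i > 0. Then c_u·h(A/c_u) + ∑_{i∈I} c_i·h((v_i − a_i)/c_i) − ∑_{i∈I} c_i·h(v_i/c_i) ≤ −ε·c_min·h(m/c_min). -/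
/-!
Put `t := A / (c_u γ)`. The move condition says every index with `a_i > 0` has density
`v_i / c_i ≤ t`, so by concavity each removal `c_i h(v_i/c_i) - c_i h((v_i - a_i)/c_i)` is at least
`a_i h′(t)`; summing, the potential drops by at least `A h′(t)`. The growth condition turns
`A h′(t)` into `(1 + ε) c_u h(A/c_u)`, so the net change is at most `-ε c_u h(A/c_u)`, and
monotonicity of `h` and of `y ↦ y h(x/y)` bound `c_u h(A/c_u) ≥ c_min h(m/c_min)`.
-/

open Finset

section

variable {h : ℝ → ℝ}

theorem ConcaveOn.sub_mul_deriv_le_sub (hconc : ConcaveOn ℝ (Set.Ici 0) h)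
    (hdiff : DifferentiableOn ℝ h (Set.Ioi 0)) {u w t : ℝ} (hu : 0 ≤ u) (huw : u < w)
    (hwt : w ≤ t) : (w - u) * deriv h t ≤ h w - h u := by
  have hw : 0 < w := hu.trans_lt huw
  have hdAt : ∀ x, 0 < x → DifferentiableAt ℝ h x := fun x hx =>
    (hdiff x hx).differentiableAt (isOpen_Ioi.mem_nhds hx)
  have hanti : AntitoneOn (deriv h) (Set.Ioi 0) :=
    (hconc.subset Set.Ioi_subset_Ici_self (convex_Ioi 0)).antitoneOn_deriv hdAt
  have hslope : deriv h t ≤ (h w - h u) / (w - u) := by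
    rw [← slope_def_field]
    exact (hanti hw (hw.trans_le hwt) hwt).trans (hconc.deriv_le_slope hu hw.le huw (hdAt w hw))
  rwa [le_div_iff₀ (sub_pos.mpr huw), mul_comm] at hslope

theorem ConcaveOn.mul_deriv_le_mul_sub_mul (hconc : ConcaveOn ℝ (Set.Ici 0) h)
    (hdiff : DifferentiableOn ℝ h (Set.Ioi 0)) {c v a t : ℝ} (hc : 0 < c) (ha : 0 ≤ a)
    (hav : a ≤ v) (hvt : 0 < a → v / c ≤ t) :
    a * deriv h t ≤ c * h (v / c) - c * h ((v - a) / c) := by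
  rcases ha.eq_or_lt with rfl | ha
  · simp
  have hslope := hconc.sub_mul_deriv_le_sub hdiff (div_nonneg (sub_nonneg.mpr hav) hc.le)
    (div_lt_div_of_pos_right (sub_lt_self v ha) hc) (hvt ha)
  calc a * deriv h t = c * ((v / c - (v - a) / c) * deriv h t) := by field_simp; ring
    _ ≤ c * (h (v / c) - h ((v - a) / c)) := mul_le_mul_of_nonneg_left hslope hc.le
    _ = c * h (v / c) - c * h ((v - a) / c) := mul_sub c _ _

theorem ConcaveOn.sum_mul_deriv_le_sum_sub {ι : Type*} (hconc : ConcaveOn ℝ (Set.Ici 0) h)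
    (hdiff : DifferentiableOn ℝ h (Set.Ioi 0)) {I : Finset ι} {c v a : ι → ℝ} {t : ℝ}
    (hc : ∀ i ∈ I, 0 < c i) (ha : ∀ i ∈ I, 0 ≤ a i ∧ a i ≤ v i)
    (hvt : ∀ i ∈ I, 0 < a i → v i / c i ≤ t) :
    (∑ i ∈ I, a i) * deriv h t
      ≤ ∑ i ∈ I, c i * h (v i / c i) - ∑ i ∈ I, c i * h ((v i - a i) / c i) := by
  rw [sum_mul, ← sum_sub_distrib]
  exact sum_le_sum fun i hi =>
    hconc.mul_deriv_le_mul_sub_mul hdiff (hc i hi) (ha i hi).1 (ha i hi).2 (hvt i hi)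

end

theorem weighted_gamma_move_decrease_general (γ ε : ℝ) (hγ : 0 < γ) (hε : 0 < ε)
    (h : ℝ → ℝ)
    (hmono : ∀ x y : ℝ, 0 ≤ x → x ≤ y → h x ≤ h y)
    (hconc : ConcaveOn ℝ (Set.Ici 0) h)
    (hdiff : DifferentiableOn ℝ h (Set.Ioi 0))
    (hgrow : ∀ x : ℝ, 0 < x → (1 + ε) * h x ≤ x * deriv h (x / γ))
    (hscale : ∀ x : ℝ, 0 ≤ x → ∀ y z : ℝ, 0 < y → y ≤ z → y * h (x / y) ≤ z * h (x / z))
    (m cmin cu : ℝ) (hm : 0 < m) (hcmin : 0 < cmin) (hcu : cmin ≤ cu)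
    {ι : Type*} (I : Finset ι) (c v a : ι → ℝ)
    (hc : ∀ i ∈ I, 0 < c i)
    (ha : ∀ i ∈ I, 0 ≤ a i ∧ a i ≤ v i)
    (hA : m ≤ ∑ i ∈ I, a i)
    (hmove : ∀ i ∈ I, 0 < a i → γ * v i / c i ≤ (∑ i' ∈ I, a i') / cu) :
    cu * h ((∑ i ∈ I, a i) / cu)
        + ∑ i ∈ I, c i * h ((v i - a i) / c i)
        - ∑ i ∈ I, c i * h (v i / c i)
      ≤ -(ε * cmin * h (m / cmin)) := by
  set A := ∑ i ∈ I, a i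
  have hcu0 : 0 < cu := hcmin.trans_le hcu
  have hAcu : 0 < A / cu := div_pos (hm.trans_le hA) hcu0
  have hremove : A * deriv h (A / cu / γ)
      ≤ ∑ i ∈ I, c i * h (v i / c i) - ∑ i ∈ I, c i * h ((v i - a i) / c i) :=
    hconc.sum_mul_deriv_le_sum_sub hdiff hc ha fun i hi hai => by
      rw [le_div_iff₀ hγ, div_mul_eq_mul_div, mul_comm]
      exact hmove i hi hai
  have hgain : (1 + ε) * (cu * h (A / cu)) ≤ A * deriv h (A / cu / γ) := by
    calc (1 + ε) * (cu * h (A / cu)) = cu * ((1 + ε) * h (A / cu)) := by ring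
      _ ≤ cu * (A / cu * deriv h (A / cu / γ)) :=
        mul_le_mul_of_nonneg_left (hgrow _ hAcu) hcu0.le
      _ = A * deriv h (A / cu / γ) := by field_simp
  have hfloor : cmin * h (m / cmin) ≤ cu * h (A / cu) :=
    (hscale m hm.le cmin cu hcmin hcu).trans <| mul_le_mul_of_nonneg_left
      (hmono _ _ (div_nonneg hm.le hcu0.le) (div_le_div_of_nonneg_right hA hcu0.le)) hcu0.le
  linarith [mul_le_mul_of_nonneg_left hfloor hε.le]

/-- Potential decrease during a `γ`-move for general costs: for a nondecreasing concave `h`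
with `h(0) = 0`, differentiable on `(0,∞)`, satisfying `x·h′(x/γ) ≥ (1+ε)h(x)` and such that
`y ↦ y·h(x/y)` is nondecreasing, a legal `γ`-move decreases the potential by at least
`ε·c_min·h(m/c_min)`. -/
theorem weighted_gamma_move_decrease (γ ε : ℝ) (hγ : 0 < γ) (hε : 0 < ε)
    (h : ℝ → ℝ)
    (hmono : ∀ x y : ℝ, 0 ≤ x → x ≤ y → h x ≤ h y)
    (hconc : ConcaveOn ℝ (Set.Ici 0) h)
    (hdiff : DifferentiableOn ℝ h (Set.Ioi 0))
    (h0 : h 0 = 0)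
    (hgrow : ∀ x : ℝ, 0 < x → (1 + ε) * h x ≤ x * deriv h (x / γ))
    (hscale : ∀ x : ℝ, 0 ≤ x → ∀ y z : ℝ, 0 < y → y ≤ z → y * h (x / y) ≤ z * h (x / z))
    (m cmin cu : ℝ) (hm : 0 < m) (hcmin : 0 < cmin) (hcu : cmin ≤ cu)
    {ι : Type*} (I : Finset ι) (c v a : ι → ℝ)
    (hc : ∀ i ∈ I, 0 < c i)
    (ha : ∀ i ∈ I, 0 ≤ a i ∧ a i ≤ v i)
    (hA : m ≤ ∑ i ∈ I, a i)
    (hmove : ∀ i ∈ I, 0 < a i → γ * v i / c i ≤ (∑ i' ∈ I, a i') / cu) :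
    cu * h ((∑ i ∈ I, a i) / cu)
        + ∑ i ∈ I, c i * h ((v i - a i) / c i)
        - ∑ i ∈ I, c i * h (v i / c i)
      ≤ -(ε * cmin * h (m / cmin)) :=
  weighted_gamma_move_decrease_general γ ε hγ hε h hmono hconc hdiff hgrow hscale m cmin cu hm hcmin
    hcu I c v a hc ha hA hmove
end

section
/- Let f : 2^N → ℝ be a 3-increasing set function on a finite ground set N. Then for all distinct elements x, y ∈ N and all sets S, T ⊆ N with {x, y} ∩ (S ∪ T) = ∅, one has I_f({x}; {y} | S) ≥ I_f({x}; {y} | S ∪ T). -/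
/-! Differentiating once more along a fresh element `z`, the derivative of `f` along `{x, y, z}`
at `C` is exactly the drop `I_f({x}; {y} | C) - I_f({x}; {y} | C ∪ {z})`. So `3`-increasing
means that adding one element to the conditioning set never increases the mutual coverage, and
adding the elements of `T` one at a time gives the claim. -/

open Finset

/-- The marginal value `f(A | C) := f(A ∪ C) - f(C)` of a set function. -/
def margS {V : Type*} [DecidableEq V] (f : Finset V → ℝ) (A C : Finset V) : ℝ :=
  f (A ∪ C) - f C

/-- The conditional mutual coverage `I_f(A; B | C) := f(A|C) + f(B|C) - f(A ∪ B | C)`. -/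
def mutcov {V : Type*} [DecidableEq V] (f : Finset V → ℝ) (A B C : Finset V) : ℝ :=
  margS f A C + margS f B C - margS f (A ∪ B) C

/-- The derivative of a set function `f` with respect to a set `A`:
`(df/dA)(S) := ∑_{B ⊆ A} (−1)^{|B|} f((S ∪ A) \ B)`. -/
def setDeriv {V : Type*} [DecidableEq V] (f : Finset V → ℝ) (A S : Finset V) : ℝ :=
  ∑ B ∈ A.powerset, (-1 : ℝ) ^ B.card * f ((S ∪ A) \ B)

section

variable {V : Type*} [DecidableEq V]

theorem setDeriv_empty (f : Finset V → ℝ) (S : Finset V) : setDeriv f ∅ S = f S := by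
  simp [setDeriv]

theorem setDeriv_insert (f : Finset V → ℝ) {a : V} {A : Finset V} (ha : a ∉ A)
    (S : Finset V) :
    setDeriv f (insert a A) S = setDeriv f A (insert a S) - setDeriv f A (S.erase a) := by
  rw [setDeriv, sum_powerset_insert ha, setDeriv, setDeriv, sub_eq_add_neg, ← sum_neg_distrib]
  congr 1
  · rw [union_insert, insert_union]
  · refine sum_congr rfl fun B hB => ?_
    have haB : a ∉ B := fun h => ha (mem_powerset.mp hB h)
    have hset : (S ∪ insert a A) \ insert a B = (S.erase a ∪ A) \ B := by
      ext b
      by_cases hb : b = a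
      · subst hb; simp [ha]
      · simp [hb]
    rw [card_insert_of_notMem haB, pow_succ, hset]
    ring

theorem setDeriv_singleton (f : Finset V → ℝ) (a : V) (S : Finset V) :
    setDeriv f {a} S = f (insert a S) - f (S.erase a) := by
  rw [← insert_empty, setDeriv_insert f (notMem_empty a), setDeriv_empty, setDeriv_empty]

theorem mutcov_singleton_singleton (f : Finset V → ℝ) (x y : V) (C : Finset V) :
    mutcov f {x} {y} C = f (insert x C) + f (insert y C) - f (insert x (insert y C)) - f C := by
  simp only [mutcov, margS, singleton_union, insert_union]
  ring

theorem setDeriv_pair (f : Finset V → ℝ) {x y : V} {C : Finset V} (hxy : x ≠ y) (hx : x ∉ C)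
    (hy : y ∉ C) :
    setDeriv f {x, y} C = -mutcov f {x} {y} C := by
  have hx' : x ∉ ({y} : Finset V) := by simpa using hxy
  rw [setDeriv_insert f hx', setDeriv_singleton, setDeriv_singleton, mutcov_singleton_singleton,
    erase_eq_of_notMem hx, erase_eq_of_notMem hy, erase_insert_of_ne hxy, erase_eq_of_notMem hy,
    insert_comm]
  ring

theorem setDeriv_triple (f : Finset V → ℝ) {x y z : V} {C : Finset V} (hxy : x ≠ y)
    (hzx : z ≠ x) (hzy : z ≠ y) (hx : x ∉ C) (hy : y ∉ C) (hz : z ∉ C) :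
    setDeriv f (insert z {x, y}) C = mutcov f {x} {y} C - mutcov f {x} {y} (insert z C) := by
  have hzxy : z ∉ ({x, y} : Finset V) := by simp [hzx, hzy]
  rw [setDeriv_insert f hzxy, erase_eq_of_notMem hz,
    setDeriv_pair f hxy (by simp [hzx.symm, hx]) (by simp [hzy.symm, hy]),
    setDeriv_pair f hxy hx hy]
  ring

theorem mutcov_insert_le {f : Finset V → ℝ}
    (h3 : ∀ (S A : Finset V), A.card = 3 → 0 ≤ setDeriv f A S) {x y z : V} {C : Finset V}
    (hxy : x ≠ y) (hzx : z ≠ x) (hzy : z ≠ y) (hx : x ∉ C) (hy : y ∉ C) :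
    mutcov f {x} {y} (insert z C) ≤ mutcov f {x} {y} C := by
  by_cases hz : z ∈ C
  · rw [insert_eq_of_mem hz]
  have hcard : (insert z {x, y} : Finset V).card = 3 := by
    rw [card_insert_of_notMem (by simp [hzx, hzy]), card_pair hxy]
  have := h3 C _ hcard
  rw [setDeriv_triple f hxy hzx hzy hx hy hz] at this
  linarith

theorem mutcov_union_le {f : Finset V → ℝ}
    (h3 : ∀ (S A : Finset V), A.card = 3 → 0 ≤ setDeriv f A S) {x y : V} (hxy : x ≠ y)
    (S T : Finset V) (hx : x ∉ S ∪ T) (hy : y ∉ S ∪ T) :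
    mutcov f {x} {y} (S ∪ T) ≤ mutcov f {x} {y} S := by
  induction T using Finset.induction_on with
  | empty => rw [union_empty]
  | insert z T _ ih =>
    rw [union_insert] at hx hy ⊢
    rw [mem_insert, not_or] at hx hy
    exact (mutcov_insert_le h3 hxy (Ne.symm hx.1) (Ne.symm hy.1) hx.2 hy.2).trans
      (ih hx.2 hy.2)

end

theorem mutcov_antitone_of_three_increasing_general {V : Type*} [DecidableEq V]
    (f : Finset V → ℝ)
    (h3 : ∀ (S A : Finset V), A.card = 3 → 0 ≤ setDeriv f A S)
    (x y : V) (hxy : x ≠ y) (S T : Finset V)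
    (hdisj : ({x, y} : Finset V) ∩ (S ∪ T) = ∅) :
    mutcov f {x} {y} (S ∪ T) ≤ mutcov f {x} {y} S := by
  rw [← disjoint_iff_inter_eq_empty, disjoint_insert_left, disjoint_singleton_left] at hdisj
  exact mutcov_union_le h3 hxy S T hdisj.1 hdisj.2

/-- For `3`-increasing set functions, mutual coverage does not increase upon conditioning:
`I_f({x};{y} | S) ≥ I_f({x};{y} | S ∪ T)` whenever `{x,y}` is disjoint from `S ∪ T`. -/
theorem mutcov_antitone_of_three_increasing {V : Type*} [Fintype V] [DecidableEq V]
    (f : Finset V → ℝ)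
    (h3 : ∀ (S A : Finset V), A.card = 3 → 0 ≤ setDeriv f A S)
    (x y : V) (hxy : x ≠ y) (S T : Finset V)
    (hdisj : ({x, y} : Finset V) ∩ (S ∪ T) = ∅) :
    mutcov f {x} {y} (S ∪ T) ≤ mutcov f {x} {y} S :=
  mutcov_antitone_of_three_increasing_general f h3 x y hxy S T hdisj
end

section
/- Let γ > 4 and m > 0. Let I and J be finite index sets, let c_u > 0, and for i ∈ I, j ∈ J let c_i > 0, d_j > 0, v_i ≥ 0 and a_{ij} ≥ 0 be real numbers satisfying: (1) ∑_{j∈J} a_{ij}/(c_i·d_j) ≤ v_i for every i; (2) with M := ∑_{i∈I}∑_{j∈J} a_{ij}/(c_u·d_j), one has v_i ≤ M/γ for every i for which a_{ij} > 0 for some j; (3) d_j ≤ c_u for every j for which a_{ij} > 0 for some i; and (4) ∑_{i∈I}∑_{j∈J} a_{ij} ≥ m. Then c_u·√M + ∑_{i∈I} c_i·√(v_i − ∑_{j∈J} a_{ij}/(c_i·d_j)) − ∑_{i∈I} c_i·√(v_i) ≤ −(√γ/2 − 1)·√m. -/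
/-!
Write `s_i := ∑_j a_{ij}/(c_i d_j)`, so that `∑_i c_i s_i = c_u M`. By concavity of `√`,
`√v_i − √(v_i − s_i) ≥ s_i / (2√v_i)`, and `s_i > 0` forces `v_i ≤ M/γ`; hence
`∑_i c_i (√v_i − √(v_i − s_i)) ≥ (√γ/2) c_u √M`, so the potential drops by at least
`(√γ/2 − 1) c_u √M`. Finally `d_j ≤ c_u` on the support of `a` gives `m ≤ c_u² M`.
-/

open Finset

namespace Real

theorem le_two_mul_sqrt_mul_sqrt_sub_sqrt_sub {s v : ℝ} (hs : 0 ≤ s) (hsv : s ≤ v) :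
    s ≤ 2 * √v * (√v - √(v - s)) := by
  have hv : √v ^ 2 = v := sq_sqrt (hs.trans hsv)
  have hvs : √(v - s) ^ 2 = v - s := sq_sqrt (sub_nonneg.2 hsv)
  have hle : √(v - s) ≤ √v := sqrt_le_sqrt (by linarith)
  nlinarith [sqrt_nonneg (v - s)]

theorem sqrt_mul_le_two_mul_sqrt_mul_sqrt_sub_sqrt_sub {γ s v M : ℝ} (hγ : 0 < γ)
    (hs : 0 ≤ s) (hsv : s ≤ v) (hvM : 0 < s → v ≤ M / γ) :
    √γ * s ≤ 2 * √M * (√v - √(v - s)) := by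
  rcases hs.eq_or_lt with rfl | hs_pos
  · simp
  have hγv : √γ * √v ≤ √M := by
    rw [← sqrt_mul hγ.le]
    exact sqrt_le_sqrt (by rw [← le_div_iff₀' hγ]; exact hvM hs_pos)
  have hdrop : 0 ≤ √v - √(v - s) := sub_nonneg.2 (sqrt_le_sqrt (by linarith))
  calc √γ * s ≤ √γ * (2 * √v * (√v - √(v - s))) :=
        mul_le_mul_of_nonneg_left (le_two_mul_sqrt_mul_sqrt_sub_sqrt_sub hs hsv) (sqrt_nonneg γ)
    _ = 2 * (√γ * √v) * (√v - √(v - s)) := by ring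
    _ ≤ 2 * √M * (√v - √(v - s)) := by gcongr

end Real

theorem exists_pos_of_sum_div_pos {κ : Type*} {J : Finset κ} {a e : κ → ℝ}
    (he : ∀ j ∈ J, 0 ≤ e j) (h : 0 < ∑ j ∈ J, a j / e j) : ∃ j ∈ J, 0 < a j := by
  by_contra! hna
  exact h.not_ge <|
    sum_nonpos fun j hj => div_nonpos_of_nonpos_of_nonneg (hna j hj) (he j hj)

theorem le_sq_mul_div_mul {a d cu : ℝ} (ha : 0 ≤ a) (hd : 0 < d) (hcu : 0 < cu)
    (hdcu : 0 < a → d ≤ cu) : a ≤ cu ^ 2 * (a / (cu * d)) := by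
  rcases ha.eq_or_lt with rfl | hpos
  · simp
  · rw [show cu ^ 2 * (a / (cu * d)) = a * (cu / d) by field_simp]
    exact le_mul_of_one_le_right ha ((one_le_div hd).2 (hdcu hpos))

section DoubleSum

variable {ι κ : Type*} (I : Finset ι) (J : Finset κ)

theorem sum_sum_le_sq_mul_sum_sum_div {cu : ℝ} (hcu : 0 < cu) {d : κ → ℝ} {a : ι → κ → ℝ}
    (hd : ∀ j ∈ J, 0 < d j) (ha : ∀ i ∈ I, ∀ j ∈ J, 0 ≤ a i j)
    (hdcu : ∀ j ∈ J, (∃ i ∈ I, 0 < a i j) → d j ≤ cu) :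
    ∑ i ∈ I, ∑ j ∈ J, a i j ≤ cu ^ 2 * ∑ i ∈ I, ∑ j ∈ J, a i j / (cu * d j) := by
  simp only [mul_sum]
  exact sum_le_sum fun i hi => sum_le_sum fun j hj =>
    le_sq_mul_div_mul (ha i hi j hj) (hd j hj) hcu fun hpos => hdcu j hj ⟨i, hi, hpos⟩

theorem mul_sum_div_mul_eq {x : ℝ} (hx : x ≠ 0) (a d : κ → ℝ) :
    x * ∑ j ∈ J, a j / (x * d j) = ∑ j ∈ J, a j / d j := by
  rw [mul_sum]
  refine sum_congr rfl fun j _ => ?_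
  rw [mul_div_assoc', mul_div_mul_left _ _ hx]

theorem sum_mul_sum_div_mul_eq {c : ι → ℝ} (hc : ∀ i ∈ I, c i ≠ 0) {x : ℝ} (hx : x ≠ 0)
    (a : ι → κ → ℝ) (d : κ → ℝ) :
    ∑ i ∈ I, c i * ∑ j ∈ J, a i j / (c i * d j) =
      x * ∑ i ∈ I, ∑ j ∈ J, a i j / (x * d j) := by
  rw [mul_sum]
  exact sum_congr rfl fun i hi =>
    (mul_sum_div_mul_eq J (hc i hi) (a i) d).trans (mul_sum_div_mul_eq J hx (a i) d).symm

end DoubleSum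

theorem sqrt_potential_gamma_move_decrease_general (γ m : ℝ) (hγ : 4 < γ) (hm : 0 < m)
    {ι κ : Type*} (I : Finset ι) (J : Finset κ)
    (cu : ℝ) (hcu : 0 < cu)
    (c : ι → ℝ) (d : κ → ℝ) (v : ι → ℝ) (a : ι → κ → ℝ)
    (hc : ∀ i ∈ I, 0 < c i) (hd : ∀ j ∈ J, 0 < d j)
    (ha : ∀ i ∈ I, ∀ j ∈ J, 0 ≤ a i j)
    (h1 : ∀ i ∈ I, ∑ j ∈ J, a i j / (c i * d j) ≤ v i)
    (h2 : ∀ i ∈ I, (∃ j ∈ J, 0 < a i j) →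
      v i ≤ (∑ i' ∈ I, ∑ j ∈ J, a i' j / (cu * d j)) / γ)
    (h3 : ∀ j ∈ J, (∃ i ∈ I, 0 < a i j) → d j ≤ cu)
    (h4 : m ≤ ∑ i ∈ I, ∑ j ∈ J, a i j) :
    cu * Real.sqrt (∑ i ∈ I, ∑ j ∈ J, a i j / (cu * d j))
        + ∑ i ∈ I, c i * Real.sqrt (v i - ∑ j ∈ J, a i j / (c i * d j))
        - ∑ i ∈ I, c i * Real.sqrt (v i)
      ≤ -(Real.sqrt γ / 2 - 1) * Real.sqrt m := by
  set M := ∑ i ∈ I, ∑ j ∈ J, a i j / (cu * d j)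
  set s : ι → ℝ := fun i => ∑ j ∈ J, a i j / (c i * d j)
  have hmM : m ≤ cu ^ 2 * M := h4.trans (sum_sum_le_sq_mul_sum_sum_div I J hcu hd ha h3)
  have hM : 0 < M := pos_of_mul_pos_right (hm.trans_le hmM) (sq_nonneg cu)
  have hsqrt_m : √m ≤ cu * √M := by
    simpa [Real.sqrt_mul (sq_nonneg cu), Real.sqrt_sq hcu.le] using Real.sqrt_le_sqrt hmM
  have hlocal (i) (hi : i ∈ I) :
      √γ * (c i * s i) ≤ 2 * √M * (c i * (√(v i) - √(v i - s i))) := by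
    have hcd (j) (hj : j ∈ J) : 0 ≤ c i * d j := (mul_pos (hc i hi) (hd j hj)).le
    have := Real.sqrt_mul_le_two_mul_sqrt_mul_sqrt_sub_sqrt_sub (by linarith)
      (sum_nonneg fun j hj => div_nonneg (ha i hi j hj) (hcd j hj)) (h1 i hi)
      fun hs => h2 i hi (exists_pos_of_sum_div_pos hcd hs)
    linarith [mul_le_mul_of_nonneg_left this (hc i hi).le]
  have hdrop : √γ * cu * √M ≤ 2 * ∑ i ∈ I, c i * (√(v i) - √(v i - s i)) := by
    have hsum := sum_le_sum hlocal
    rw [← mul_sum, ← mul_sum,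
      sum_mul_sum_div_mul_eq I J (fun i hi => (hc i hi).ne') hcu.ne'] at hsum
    refine le_of_mul_le_mul_left ?_ (Real.sqrt_pos.2 hM)
    calc √M * (√γ * cu * √M) = √γ * (cu * (√M * √M)) := by ring
      _ = √γ * (cu * M) := by rw [Real.mul_self_sqrt hM.le]
      _ ≤ 2 * √M * ∑ i ∈ I, c i * (√(v i) - √(v i - s i)) := hsum
      _ = √M * (2 * ∑ i ∈ I, c i * (√(v i) - √(v i - s i))) := by ring
  have hγ2 : 2 < √γ := (Real.lt_sqrt zero_le_two).2 (by linarith)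
  simp only [mul_sub, sum_sub_distrib] at hdrop
  linarith [mul_le_mul_of_nonneg_left hsqrt_m (by linarith : (0 : ℝ) ≤ √γ / 2 - 1)]

/-- Potential decrease for the `3`-increasing potential `Φ_{1/2}` during a `γ`-move:
with `M := ∑_{i,j} a_{ij}/(c_u·d_j)`, under the stated conditions,
`c_u·√M + ∑_i c_i·√(v_i − ∑_j a_{ij}/(c_i·d_j)) − ∑_i c_i·√v_i ≤ −(√γ/2 − 1)·√m`. -/
theorem sqrt_potential_gamma_move_decrease (γ m : ℝ) (hγ : 4 < γ) (hm : 0 < m)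
    {ι κ : Type*} (I : Finset ι) (J : Finset κ)
    (cu : ℝ) (hcu : 0 < cu)
    (c : ι → ℝ) (d : κ → ℝ) (v : ι → ℝ) (a : ι → κ → ℝ)
    (hc : ∀ i ∈ I, 0 < c i) (hd : ∀ j ∈ J, 0 < d j)
    (hv : ∀ i ∈ I, 0 ≤ v i) (ha : ∀ i ∈ I, ∀ j ∈ J, 0 ≤ a i j)
    (h1 : ∀ i ∈ I, ∑ j ∈ J, a i j / (c i * d j) ≤ v i)
    (h2 : ∀ i ∈ I, (∃ j ∈ J, 0 < a i j) →
      v i ≤ (∑ i' ∈ I, ∑ j ∈ J, a i' j / (cu * d j)) / γ)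
    (h3 : ∀ j ∈ J, (∃ i ∈ I, 0 < a i j) → d j ≤ cu)
    (h4 : m ≤ ∑ i ∈ I, ∑ j ∈ J, a i j) :
    cu * Real.sqrt (∑ i ∈ I, ∑ j ∈ J, a i j / (cu * d j))
        + ∑ i ∈ I, c i * Real.sqrt (v i - ∑ j ∈ J, a i j / (c i * d j))
        - ∑ i ∈ I, c i * Real.sqrt (v i)
      ≤ -(Real.sqrt γ / 2 - 1) * Real.sqrt m :=
  sqrt_potential_gamma_move_decrease_general γ m hγ hm I J cu hcu c d v a hc hd ha h1 h2 h3 h4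
end

section
/- Let γ > e, m > 0 and c_u > 0. Let (c_i), (v_i), (a_i), indexed by a finite set I, satisfy c_i > 0, v_i > 0 and 0 ≤ a_i ≤ v_i, let A := ∑_{i∈I} a_i, and assume A ≥ m and γ·v_i/c_i ≤ A/c_u for every i with a_i > 0. Then, with the convention 0·ln(c/0) := 0, one has A·ln(c_u/A) + ∑_{i∈I} (v_i − a_i)·ln(c_i/(v_i − a_i)) − ∑_{i∈I} v_i·ln(c_i/v_i) ≤ −m·ln(γ/e). -/
open Finset Real

/-! The map `y ↦ y * log (c / y)` is concave with derivative `log (c / y) - 1`, so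
moving the mass `a_i` out of `v_i` changes `∑ v_i log (c_i / v_i)` by at most
`a_i (1 - log (c_i / v_i))`.
Moving it to the new class costs `A log (c_u / A)`, and the `γ`-move condition says
`c_i / v_i ≥ γ c_u / A` wherever `a_i > 0`, so the total change is at most
`A log (c_u / A) + A - A log (γ c_u / A) = -A log (γ / e) ≤ -m log (γ / e)`. -/

lemma mul_log_div_le_sub {x y : ℝ} (hx : 0 < x) (hy : 0 ≤ y) : y * log (x / y) ≤ x - y := by
  rcases hy.eq_or_lt with rfl | hy
  · simpa using hx.le
  · calc y * log (x / y) ≤ y * (x / y - 1) :=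
          mul_le_mul_of_nonneg_left (log_le_sub_one_of_pos (by positivity)) hy.le
      _ = x - y := by field_simp

lemma mul_log_div_le_tangent {c x y : ℝ} (hc : c ≠ 0) (hx : 0 < x) (hy : 0 ≤ y) :
    y * log (c / y) ≤ x * log (c / x) + (y - x) * (log (c / x) - 1) := by
  have hsplit : y * log (c / y) = y * log (c / x) + y * log (x / y) := by
    rcases hy.eq_or_lt with rfl | hy
    · simp
    · rw [← mul_add, ← log_mul (by positivity) (by positivity), div_mul_div_cancel₀ hx.ne']
  linarith [mul_log_div_le_sub hx hy]

lemma div_le_div_of_mul_div_le_div {x v c A B : ℝ} (hv : 0 < v) (hc : 0 < c) (hA : 0 < A)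
    (hB : 0 < B) (h : x * v / c ≤ A / B) : x * B / A ≤ c / v := by
  rw [div_le_div_iff₀ hc hB] at h
  rw [div_le_div_iff₀ hA hv]
  linarith

/-- Shannon entropy potential decrease during a `γ`-move: with `A := ∑ a_i ≥ m > 0` and
`γ·v_i/c_i ≤ A/c_u` whenever `a_i > 0`,
`A·ln(c_u/A) + ∑ (v_i − a_i)·ln(c_i/(v_i − a_i)) − ∑ v_i·ln(c_i/v_i) ≤ −m·ln(γ/e)`
(with the convention `0·ln(c/0) := 0`, which in Lean holds automatically since the factor
in front of the logarithm is `0`). -/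
theorem shannon_gamma_move_decrease (γ m cu : ℝ) (hγ : Real.exp 1 < γ) (hm : 0 < m)
    (hcu : 0 < cu)
    {ι : Type*} (I : Finset ι) (c v a : ι → ℝ)
    (hc : ∀ i ∈ I, 0 < c i) (hv : ∀ i ∈ I, 0 < v i)
    (ha : ∀ i ∈ I, 0 ≤ a i ∧ a i ≤ v i)
    (hA : m ≤ ∑ i ∈ I, a i)
    (hmove : ∀ i ∈ I, 0 < a i → γ * v i / c i ≤ (∑ i' ∈ I, a i') / cu) :
    (∑ i ∈ I, a i) * Real.log (cu / ∑ i ∈ I, a i)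
        + ∑ i ∈ I, (v i - a i) * Real.log (c i / (v i - a i))
        - ∑ i ∈ I, v i * Real.log (c i / v i)
      ≤ -m * Real.log (γ / Real.exp 1) := by
  set A := ∑ i ∈ I, a i with hA_def
  have hA_pos : 0 < A := hm.trans_le hA
  have hγ_pos : 0 < γ := (exp_pos 1).trans hγ
  have hremove :
      ∑ i ∈ I, (v i - a i) * log (c i / (v i - a i)) - ∑ i ∈ I, v i * log (c i / v i)
        ≤ A - ∑ i ∈ I, a i * log (c i / v i) := by
    rw [← sum_sub_distrib, hA_def, ← sum_sub_distrib]
    refine sum_le_sum fun i hi => ?_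
    linarith [mul_log_div_le_tangent (hc i hi).ne' (hv i hi) (sub_nonneg.2 (ha i hi).2)]
  have hmoved : A * log (γ * cu / A) ≤ ∑ i ∈ I, a i * log (c i / v i) := by
    rw [hA_def, sum_mul]
    refine sum_le_sum fun i hi => ?_
    rcases (ha i hi).1.eq_or_lt with h0 | hpos
    · simp [← h0]
    · refine mul_le_mul_of_nonneg_left (log_le_log (by positivity) ?_) hpos.le
      exact div_le_div_of_mul_div_le_div (hv i hi) (hc i hi) hA_pos hcu (hmove i hi hpos)
  have hlog_pos : 0 ≤ log (γ / exp 1) := log_nonneg ((one_le_div (exp_pos 1)).2 hγ.le)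
  calc A * log (cu / A) + ∑ i ∈ I, (v i - a i) * log (c i / (v i - a i))
        - ∑ i ∈ I, v i * log (c i / v i)
      ≤ A * log (cu / A) + A - A * log (γ * cu / A) := by linarith
    _ = -A * log (γ / exp 1) := by
      rw [mul_div_assoc, log_mul hγ_pos.ne' (by positivity), log_div hγ_pos.ne' (exp_ne_zero 1),
        log_exp]
      ring
    _ ≤ -m * log (γ / exp 1) := mul_le_mul_of_nonneg_right (neg_le_neg hA) hlog_pos
end
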